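/- If (B_t)_{t∈[0,1]} is a continuous path of barcodes such that there exists a continuous positive function f : [0,1] → ℝ_{>0} with Spec(B_t) = f(t)·Spec(B_0) for all t (no bifurcations in the spectrum), then B_t is the dilation of B_0 by the factor f(t), i.e. every bar (a,b] of B_0 corresponds to the bar (f(t)a, f(t)b] of B_t with the same multiplicity. -/

import Mathlib

open scoped Classical
noncomputable section

/-- A bar: a pair `(a, b)` representing the interval `(a, b]` (with `b = ⊤` for `(a, ∞)`). -/
abbrev Bar : Type := ℝ × EReal

namespace Bar

/-- The interval `(a,b]` is nonempty. -/
def IsValid (I : Bar) : Prop := (I.1 : EReal) < I.2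

/-- The length of a bar. -/
def len (I : Bar) : EReal := I.2 - (I.1 : EReal)

/-- A bar is semi-infinite if its right endpoint is `+∞`. -/
def IsInf (I : Bar) : Prop := I.2 = ⊤

end Bar

/-- `I ⊆ J^{-δ}`, where `(a,b]^{-δ} = (a-δ, b+δ]`. -/
def barSub (I J : Bar) (δ : ℝ) : Prop :=
  J.1 - δ ≤ I.1 ∧ I.2 ≤ J.2 + (δ : EReal)

/-- A barcode: a multiset of nonempty intervals of the form `(a,b]` or `(a,∞)`,
recorded by its multiplicity function. -/
structure Barcode where
  mult : Bar → ℕ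
  valid : ∀ I, mult I ≠ 0 → I.IsValid

namespace Barcode

/-- `m` is a `δ`-matching between the barcodes `B` and `B'`: it matches `m I J` copies of the
bar `I` of `B` with copies of the bar `J` of `B'`; matched bars must be `δ`-close, and
unmatched (deleted) bars must have length at most `2δ`. -/
def IsMatching (B B' : Barcode) (δ : ℝ) (m : Bar → Bar → ℕ) : Prop :=
  (∀ I, {J | m I J ≠ 0}.Finite) ∧
  (∀ J, {I | m I J ≠ 0}.Finite) ∧
  (∀ I, ∑ᶠ J, m I J ≤ B.mult I) ∧
  (∀ J, ∑ᶠ I, m I J ≤ B'.mult J) ∧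
  (∀ I, ∑ᶠ J, m I J < B.mult I → I.len ≤ ((2 * δ : ℝ) : EReal)) ∧
  (∀ J, ∑ᶠ I, m I J < B'.mult J → J.len ≤ ((2 * δ : ℝ) : EReal)) ∧
  (∀ I J, m I J ≠ 0 → barSub I J δ ∧ barSub J I δ)

/-- `B` and `B'` admit a `δ`-matching. -/
def HasMatching (B B' : Barcode) (δ : ℝ) : Prop := ∃ m, IsMatching B B' δ m

/-- The bottleneck distance between two barcodes. -/
def bottleneck (B B' : Barcode) : EReal :=
  sInf {x : EReal | ∃ δ : ℝ, 0 ≤ δ ∧ x = (δ : EReal) ∧ HasMatching B B' δ}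

/-- A barcode is finite if it has finitely many bars counted with multiplicity. -/
def IsFinite (B : Barcode) : Prop := {I | B.mult I ≠ 0}.Finite

/-- A barcode is q-tame if for every `ε > 0` it has finitely many bars of length `≥ ε`. -/
def QTame (B : Barcode) : Prop :=
  ∀ ε : ℝ, 0 < ε → {I | B.mult I ≠ 0 ∧ (ε : EReal) ≤ I.len}.Finite

end Barcode

/-- Rescale a bar by a factor `c`: `(a,b] ↦ (ca, cb]`, `(a,∞) ↦ (ca, ∞)`. -/
def scaleBar (c : ℝ) (J : Bar) : Bar :=
  (c * J.1, if J.2 = ⊤ then ⊤ else (c : EReal) * J.2)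

/-- The barcode obtained from `B` by rescaling all endpoints of its bars by `c`
(bars that become empty are deleted). -/
def Barcode.scale (B : Barcode) (c : ℝ) : Barcode where
  mult I := if I.IsValid then ∑ᶠ (J : Bar) (_ : scaleBar c J = I), B.mult J else 0
  valid I h := by
    try dsimp only at h
    by_cases hv : I.IsValid
    · exact hv
    · rw [if_neg hv] at h; exact absurd rfl h

/-- The spectrum of a barcode: the set of finite endpoints of its bars. -/
def Barcode.spec (B : Barcode) : Set ℝ :=
  {x | ∃ I : Bar, B.mult I ≠ 0 ∧ (I.1 = x ∨ I.2 = (x : EReal))}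

/-!
Since the spectrum of `B₀` is finite, its points are separated by a positive gap. For `s` close to
`t`, a bottleneck matching between `B_s` and `B_t` moves endpoints by less than that gap (after
rescaling), so it can only pair each bar of `B_t` with its dilate by `f(s)/f(t)`, and no bar is
short enough to be left unmatched; hence `B_s` is the dilate of `B_t` for `s` near `t`, and
connectedness of `[0,1]` propagates this from `t = 0`. At `t = 0` itself,
`f(0)·Spec(B₀) = Spec(B₀)` for a finite spectrum forces `f(0) = 1` or `Spec(B₀) ⊆ {0}`, and in
both cases `B₀` is its own dilate by `f(0)`.
-/

open Filter Topology

theorem scaleBar_mk_coe (c a b : ℝ) :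
    scaleBar c (a, (b : EReal)) = (c * a, ((c * b : ℝ) : EReal)) := by
  simp [scaleBar, EReal.coe_mul]

theorem scaleBar_mk_top (c a : ℝ) : scaleBar c (a, ⊤) = (c * a, ⊤) := by
  simp [scaleBar]

theorem scaleBar_mk_bot {c : ℝ} (hc : 0 < c) (a : ℝ) : scaleBar c (a, ⊥) = (c * a, ⊥) := by
  simp [scaleBar, EReal.mul_bot_of_pos (EReal.coe_pos.mpr hc)]

theorem scaleBar_scaleBar {c d : ℝ} (hc : 0 < c) (hd : 0 < d) (I : Bar) :
    scaleBar c (scaleBar d I) = scaleBar (c * d) I := by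
  obtain ⟨a, b⟩ := I
  induction b using EReal.rec with
  | bot => rw [scaleBar_mk_bot hd, scaleBar_mk_bot hc, scaleBar_mk_bot (mul_pos hc hd), mul_assoc]
  | coe b => rw [scaleBar_mk_coe, scaleBar_mk_coe, scaleBar_mk_coe, mul_assoc, mul_assoc]
  | top => rw [scaleBar_mk_top, scaleBar_mk_top, scaleBar_mk_top, mul_assoc]

theorem scaleBar_one (I : Bar) : scaleBar 1 I = I := by
  obtain ⟨a, b⟩ := I
  induction b using EReal.rec with
  | bot => rw [scaleBar_mk_bot one_pos, one_mul]
  | coe b => rw [scaleBar_mk_coe, one_mul, one_mul]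
  | top => rw [scaleBar_mk_top, one_mul]

theorem scaleBar_inv_scaleBar {c : ℝ} (hc : 0 < c) (I : Bar) :
    scaleBar c⁻¹ (scaleBar c I) = I := by
  rw [scaleBar_scaleBar (inv_pos.mpr hc) hc, inv_mul_cancel₀ hc.ne', scaleBar_one]

theorem scaleBar_scaleBar_inv {c : ℝ} (hc : 0 < c) (I : Bar) :
    scaleBar c (scaleBar c⁻¹ I) = I := by
  simpa using scaleBar_inv_scaleBar (inv_pos.mpr hc) I

theorem scaleBar_injective {c : ℝ} (hc : 0 < c) : Function.Injective (scaleBar c) :=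
  Function.LeftInverse.injective (scaleBar_inv_scaleBar hc)

theorem isValid_scaleBar_iff {c : ℝ} (hc : 0 < c) {I : Bar} :
    (scaleBar c I).IsValid ↔ I.IsValid := by
  obtain ⟨a, b⟩ := I
  induction b using EReal.rec with
  | bot => simp [scaleBar_mk_bot hc, Bar.IsValid]
  | coe b =>
    simp only [scaleBar_mk_coe, Bar.IsValid, EReal.coe_lt_coe_iff]
    exact mul_lt_mul_iff_right₀ hc
  | top => simp only [scaleBar_mk_top, Bar.IsValid, EReal.coe_lt_top]

namespace Barcode

variable {B B' : Barcode} {c : ℝ} {I : Bar}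

theorem ext_mult (h : ∀ I, B.mult I = B'.mult I) : B = B' := by
  cases B; cases B'; congr 1; exact funext h

theorem mult_eq_zero_of_not_isValid (h : ¬ I.IsValid) : B.mult I = 0 :=
  not_imp_comm.mp (B.valid I) h

theorem mult_scale_scaleBar (B : Barcode) (hc : 0 < c) (I : Bar) :
    (B.scale c).mult (scaleBar c I) = B.mult I := by
  show (if _ then _ else _) = _
  split_ifs with hI
  · simp_rw [(scaleBar_injective hc).eq_iff]
    exact finsum_cond_eq_left
  · exact (mult_eq_zero_of_not_isValid ((isValid_scaleBar_iff hc).not.mp hI)).symm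

theorem eq_scale_iff (hc : 0 < c) : B' = B.scale c ↔ ∀ I, B'.mult (scaleBar c I) = B.mult I := by
  refine ⟨fun h I => h ▸ B.mult_scale_scaleBar hc I, fun h => ext_mult fun J => ?_⟩
  rw [← scaleBar_scaleBar_inv hc J, h, mult_scale_scaleBar _ hc]

theorem scale_scale (B : Barcode) {d : ℝ} (hc : 0 < c) (hd : 0 < d) :
    (B.scale c).scale d = B.scale (d * c) :=
  (eq_scale_iff (mul_pos hd hc)).mpr fun I => by
    rw [← scaleBar_scaleBar hd hc, mult_scale_scaleBar _ hd, mult_scale_scaleBar _ hc]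

theorem eq_scale_inv_of_eq_scale (hc : 0 < c) (h : B' = B.scale c) : B = B'.scale c⁻¹ :=
  (eq_scale_iff (inv_pos.mpr hc)).mpr fun I => by
    rw [h, ← mult_scale_scaleBar B hc (scaleBar c⁻¹ I), scaleBar_scaleBar_inv hc]

theorem fst_mem_spec (h : B.mult I ≠ 0) : I.1 ∈ B.spec :=
  ⟨I, h, Or.inl rfl⟩

theorem snd_eq_top_or_mem_spec (h : B.mult I ≠ 0) :
    I.2 = ⊤ ∨ ∃ y ∈ B.spec, I.2 = (y : EReal) := by
  obtain ⟨x, y⟩ := I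
  induction y using EReal.rec with
  | bot => exact absurd (B.valid _ h) (by simp [Bar.IsValid])
  | coe y => exact Or.inr ⟨y, ⟨_, h, Or.inr rfl⟩, rfl⟩
  | top => exact Or.inl rfl

theorem IsFinite.spec_finite (h : B.IsFinite) : B.spec.Finite := by
  refine (h.biUnion fun I _ => ({I.1, I.2.toReal} : Set ℝ).toFinite).subset ?_
  rintro x ⟨I, hI, hx | hx⟩
  · exact Set.mem_biUnion hI (by simp [hx])
  · exact Set.mem_biUnion hI (by simp [hx])

theorem scaleBar_eq_self_of_mult_ne_zero (hspec : ∀ x ∈ B.spec, c * x = x) (hI : B.mult I ≠ 0) :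
    scaleBar c I = I := by
  refine Prod.ext (hspec _ (fst_mem_spec hI)) ?_
  rcases snd_eq_top_or_mem_spec hI with hy | ⟨y, hy, hy'⟩
  · simp [scaleBar, hy]
  · simp [scaleBar, hy', ← EReal.coe_mul, hspec y hy]

theorem eq_scale_self (hc : 0 < c) (hspec : ∀ x ∈ B.spec, c * x = x) : B = B.scale c :=
  (eq_scale_iff hc).mpr fun I => by
    rcases eq_or_ne (B.mult I) 0 with hI | hI
    · rw [hI]
      by_contra h
      exact h (by rwa [scaleBar_injective hc (scaleBar_eq_self_of_mult_ne_zero hspec h)])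
    · rw [scaleBar_eq_self_of_mult_ne_zero hspec hI]

end Barcode

theorem Set.Finite.forall_mul_eq_self_of_image_mul_eq {S : Set ℝ} {c : ℝ} (hS : S.Finite)
    (hc : 0 < c) (h : (c * ·) '' S = S) : ∀ x ∈ S, c * x = x := by
  intro x hx
  rcases eq_or_ne c 1 with rfl | hc1
  · exact one_mul x
  -- a point `x₀ = c * y` of maximal modulus has `c * |x₀| ≤ |x₀|` and `|x₀| ≤ c * |x₀|`
  obtain ⟨x₀, hx₀, hmax⟩ := S.exists_max_image (|·|) hS ⟨x, hx⟩
  obtain ⟨y, hy, rfl⟩ : x₀ ∈ (c * ·) '' S := h.symm ▸ hx₀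
  have h₁ := hmax _ (h ▸ ⟨c * y, hx₀, rfl⟩ : c * (c * y) ∈ S)
  have h₂ := hmax y hy
  simp only [abs_mul, abs_of_pos hc] at h₁ h₂
  have hy0 : (c - 1) * |y| = 0 := by nlinarith
  have hx0 : x = 0 := abs_nonpos_iff.mp <| by
    simpa [abs_mul, (mul_eq_zero.mp hy0).resolve_left (sub_ne_zero.mpr hc1)] using hmax x hx
  rw [hx0, mul_zero]

def ScaledApart (S : Set ℝ) (a b δ : ℝ) : Prop :=
  ∀ x ∈ S, ∀ y ∈ S, x ≠ y → δ < |a * x - b * y|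

section ScaledApart

variable {S : Set ℝ} {a b c δ δ' u v : ℝ}

theorem ScaledApart.mono (h : ScaledApart S a b δ) (hδ : δ' ≤ δ) : ScaledApart S a b δ' :=
  fun x hx y hy hxy => hδ.trans_lt (h x hx y hy hxy)

theorem ScaledApart.eq_div_mul (h : ScaledApart S a b δ) (ha : a ≠ 0) (hu : u ∈ (a * ·) '' S)
    (hv : v ∈ (b * ·) '' S) (huv : |u - v| ≤ δ) : v = b / a * u := by
  obtain ⟨x, hx, rfl⟩ := hu
  obtain ⟨y, hy, rfl⟩ := hv
  obtain rfl : x = y := by_contra fun hxy => (h x hx y hy hxy).not_ge huv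
  field_simp

theorem Set.Finite.eventually_scaledApart (hS : S.Finite) (hc : c ≠ 0) :
    ∀ᶠ p : ℝ × ℝ × ℝ in 𝓝 (c, c, 0), ScaledApart S p.1 p.2.1 p.2.2 := by
  refine (eventually_all_finite hS).mpr fun x _ => (eventually_all_finite hS).mpr fun y _ => ?_
  rcases eq_or_ne x y with rfl | hxy
  · exact .of_forall fun _ h => absurd rfl h
  have hpos : (0 : ℝ) < |c * x - c * y| := by
    rw [← mul_sub]
    exact abs_pos.mpr (mul_ne_zero hc (sub_ne_zero.mpr hxy))
  have hcont : ContinuousAt (fun p : ℝ × ℝ × ℝ => |p.1 * x - p.2.1 * y|) (c, c, 0) := by fun_prop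
  filter_upwards [continuousAt_snd.snd.eventually_lt hcont hpos] with p hp _ using hp

end ScaledApart

namespace Barcode

variable {B B' : Barcode} {S : Set ℝ} {a b δ : ℝ} {I J : Bar} {m : Bar → Bar → ℕ}

theorem exists_hasMatching_of_bottleneck_lt {ε : ℝ} (h : bottleneck B B' < ε) :
    ∃ δ, 0 ≤ δ ∧ δ < ε ∧ HasMatching B B' δ := by
  obtain ⟨_, ⟨δ, hδ, rfl, hm⟩, hlt⟩ := sInf_lt_iff.mp h
  exact ⟨δ, hδ, EReal.coe_lt_coe_iff.mp hlt, hm⟩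

theorem not_len_le_of_scaledApart (hB : B.spec = (a * ·) '' S) (h : ScaledApart S a a (2 * δ))
    (hI : B.mult I ≠ 0) : ¬ I.len ≤ ((2 * δ : ℝ) : EReal) := by
  intro hle
  rcases snd_eq_top_or_mem_spec hI with htop | ⟨y, hy, hy'⟩
  · rw [Bar.len, htop, EReal.top_sub_coe, top_le_iff] at hle
    exact EReal.coe_ne_top _ hle
  obtain ⟨x, hx, hxI⟩ := hB ▸ fst_mem_spec hI
  obtain ⟨x', hx', rfl⟩ := hB ▸ hy
  have hv := B.valid I hI
  rw [Bar.IsValid, hy', ← hxI, EReal.coe_lt_coe_iff] at hv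
  rw [Bar.len, hy', ← hxI, ← EReal.coe_sub, EReal.coe_le_coe_iff] at hle
  have hgap := h x' hx' x hx (by rintro rfl; exact lt_irrefl _ hv)
  rw [abs_of_pos (by linarith)] at hgap
  linarith

theorem eq_scaleBar_of_barSub (ha : a ≠ 0) (hB : B.spec = (a * ·) '' S)
    (hB' : B'.spec = (b * ·) '' S) (h : ScaledApart S a b δ) (hI : B.mult I ≠ 0)
    (hJ : B'.mult J ≠ 0) (hIJ : barSub I J δ) (hJI : barSub J I δ) : J = scaleBar (b / a) I := by
  refine Prod.ext (h.eq_div_mul ha (hB ▸ fst_mem_spec hI) (hB' ▸ fst_mem_spec hJ)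
    (abs_sub_le_iff.mpr ⟨by linarith [hJI.1], by linarith [hIJ.1]⟩)) ?_
  have hIJ₂ := hIJ.2
  have hJI₂ := hJI.2
  rcases snd_eq_top_or_mem_spec hI with hI₂ | ⟨y, hy, hI₂⟩ <;>
    rcases snd_eq_top_or_mem_spec hJ with hJ₂ | ⟨y', hy', hJ₂⟩ <;>
    rw [hI₂, hJ₂] at hIJ₂ hJI₂
  · simp [scaleBar, hI₂, hJ₂]
  · rw [← EReal.coe_add, top_le_iff] at hIJ₂
    exact absurd hIJ₂ (EReal.coe_ne_top _)
  · rw [← EReal.coe_add, top_le_iff] at hJI₂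
    exact absurd hJI₂ (EReal.coe_ne_top _)
  · rw [← EReal.coe_add, EReal.coe_le_coe_iff] at hIJ₂ hJI₂
    rw [hJ₂, h.eq_div_mul (u := y) (v := y') ha (hB ▸ hy) (hB' ▸ hy')
      (abs_sub_le_iff.mpr ⟨by linarith, by linarith⟩)]
    simp [scaleBar, hI₂, EReal.coe_mul]

namespace IsMatching

theorem mult_left_ne_zero (hm : IsMatching B B' δ m) (h : m I J ≠ 0) : B.mult I ≠ 0 := by
  have := (single_le_finsum J (hm.1 I) fun _ => Nat.zero_le _).trans (hm.2.2.1 I)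
  omega

theorem mult_right_ne_zero (hm : IsMatching B B' δ m) (h : m I J ≠ 0) : B'.mult J ≠ 0 := by
  have := (single_le_finsum (f := (m · J)) I (hm.2.1 J) fun _ => Nat.zero_le _).trans
    (hm.2.2.2.1 J)
  omega

theorem finsum_left_eq (hm : IsMatching B B' δ m)
    (hdel : ∀ I, B.mult I ≠ 0 → ¬ I.len ≤ ((2 * δ : ℝ) : EReal)) (I : Bar) :
    ∑ᶠ J, m I J = B.mult I :=
  (hm.2.2.1 I).antisymm (not_lt.mp fun hlt => hdel I (by omega) (hm.2.2.2.2.1 I hlt))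

theorem finsum_right_eq (hm : IsMatching B B' δ m)
    (hdel : ∀ J, B'.mult J ≠ 0 → ¬ J.len ≤ ((2 * δ : ℝ) : EReal)) (J : Bar) :
    ∑ᶠ I, m I J = B'.mult J :=
  (hm.2.2.2.1 J).antisymm (not_lt.mp fun hlt => hdel J (by omega) (hm.2.2.2.2.2.1 J hlt))

theorem mult_apply_eq {σ : Bar → Bar} (hm : IsMatching B B' δ m)
    (hdel : ∀ I, B.mult I ≠ 0 → ¬ I.len ≤ ((2 * δ : ℝ) : EReal))
    (hdel' : ∀ J, B'.mult J ≠ 0 → ¬ J.len ≤ ((2 * δ : ℝ) : EReal)) (hσ : σ.Injective)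
    (hmσ : ∀ I J, m I J ≠ 0 → J = σ I) (I : Bar) : B'.mult (σ I) = B.mult I :=
  calc B'.mult (σ I) = ∑ᶠ I', m I' (σ I) := (hm.finsum_right_eq hdel' _).symm
    _ = m I (σ I) := finsum_eq_single _ I fun _ hne =>
      by_contra fun h => hne (hσ (hmσ _ _ h).symm)
    _ = ∑ᶠ J, m I J := (finsum_eq_single _ (σ I) fun _ hne =>
      by_contra fun h => hne (hmσ _ _ h)).symm
    _ = B.mult I := hm.finsum_left_eq hdel I

theorem eq_scale (ha : 0 < a) (hb : 0 < b) (hB : B.spec = (a * ·) '' S)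
    (hB' : B'.spec = (b * ·) '' S) (hab : ScaledApart S a b δ) (haa : ScaledApart S a a (2 * δ))
    (hbb : ScaledApart S b b (2 * δ)) (hm : IsMatching B B' δ m) : B' = B.scale (b / a) :=
  (eq_scale_iff (div_pos hb ha)).mpr <|
    hm.mult_apply_eq (fun _ => not_len_le_of_scaledApart hB haa)
      (fun _ => not_len_le_of_scaledApart hB' hbb) (scaleBar_injective (div_pos hb ha))
      fun I J h => eq_scaleBar_of_barSub ha.ne' hB hB' hab (hm.mult_left_ne_zero h)
        (hm.mult_right_ne_zero h) (hm.2.2.2.2.2.2 I J h).1 (hm.2.2.2.2.2.2 I J h).2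

end IsMatching

end Barcode

theorem Barcode.eventually_eq_scale {ι : Type*} {l : Filter ι} {B : ι → Barcode} {B₀ : Barcode}
    {f : ι → ℝ} {c : ℝ} {S : Set ℝ} (hS : S.Finite) (hc : 0 < c) (hf : Tendsto f l (𝓝 c))
    (hB : ∀ ε : ℝ, 0 < ε → ∀ᶠ i in l, bottleneck (B i) B₀ < ε)
    (hspec : ∀ᶠ i in l, (B i).spec = (f i * ·) '' S) (hspec₀ : B₀.spec = (c * ·) '' S) :
    ∀ᶠ i in l, B i = B₀.scale (f i / c) := by
  obtain ⟨ε, hε, hsep⟩ := Metric.eventually_nhds_iff.mp (hS.eventually_scaledApart hc.ne')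
  have hapart : ∀ a b δ, dist a c < ε → dist b c < ε → 0 ≤ δ → δ < ε → ScaledApart S a b δ :=
    fun a b δ ha hb hδ hδε => hsep (y := (a, b, δ)) <| by
      rw [Prod.dist_eq, Prod.dist_eq, dist_zero_right, Real.norm_of_nonneg hδ]
      exact max_lt ha (max_lt hb hδε)
  have hcc : dist c c < ε := by rwa [dist_self]
  filter_upwards [Metric.tendsto_nhds.mp hf ε hε, hf.eventually (lt_mem_nhds hc),
    hB (ε / 2) (half_pos hε), hspec] with i hfi hfpos hbot hspec_i
  obtain ⟨δ, hδ, hδε, m, hm⟩ := exists_hasMatching_of_bottleneck_lt hbot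
  have h2δ : 0 ≤ 2 * δ := by positivity
  have h2δε : 2 * δ < ε := by linarith
  have hB₀ := hm.eq_scale hfpos hc hspec_i hspec₀
    ((hapart _ _ _ hfi hcc h2δ h2δε).mono (by linarith))
    (hapart _ _ _ hfi hfi h2δ h2δε) (hapart _ _ _ hcc hcc h2δ h2δε)
  rw [eq_scale_inv_of_eq_scale (div_pos hc hfpos) hB₀, inv_div]

/-- If `(B_t)` is a continuous path of finite barcodes whose spectra satisfy
`Spec(B_t) = f(t)·Spec(B_0)` for a continuous positive function `f`, then `B_t` is the
dilation of `B_0` by the factor `f(t)`. -/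
theorem dilation_of_spec_scaling (Bt : ℝ → Barcode)
    (hfin : ∀ t ∈ Set.Icc (0 : ℝ) 1, (Bt t).IsFinite)
    (hcont : ∀ t ∈ Set.Icc (0 : ℝ) 1, ∀ ε : ℝ, 0 < ε → ∃ η : ℝ, 0 < η ∧
      ∀ s ∈ Set.Icc (0 : ℝ) 1, |s - t| < η →
        Barcode.bottleneck (Bt s) (Bt t) < (ε : EReal))
    (f : ℝ → ℝ) (hfcont : ContinuousOn f (Set.Icc (0 : ℝ) 1))
    (hfpos : ∀ t ∈ Set.Icc (0 : ℝ) 1, 0 < f t)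
    (hspec : ∀ t ∈ Set.Icc (0 : ℝ) 1,
      (Bt t).spec = (fun x => f t * x) '' (Bt 0).spec) :
    ∀ t ∈ Set.Icc (0 : ℝ) 1, Bt t = (Bt 0).scale (f t) := by
  have h0 : (0 : ℝ) ∈ Set.Icc (0 : ℝ) 1 := ⟨le_rfl, zero_le_one⟩
  have hS : (Bt 0).spec.Finite := (hfin 0 h0).spec_finite
  have hlocal : ∀ x ∈ Set.Icc (0 : ℝ) 1,
      ∀ᶠ y in 𝓝[Set.Icc 0 1] x, Bt y = (Bt x).scale (f y / f x) := by
    intro x hx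
    refine Barcode.eventually_eq_scale hS (hfpos x hx) (hfcont x hx) (fun ε hε => ?_)
      (eventually_nhdsWithin_of_forall hspec) (hspec x hx)
    obtain ⟨η, hη, hclose⟩ := hcont x hx ε hε
    exact eventually_nhdsWithin_iff.mpr (Metric.eventually_nhds_iff.mpr
      ⟨η, hη, fun y hy hyI => hclose y hyI (by rwa [Real.dist_eq] at hy)⟩)
  have hchain : ∀ t ∈ Set.Icc (0 : ℝ) 1, Bt t = (Bt 0).scale (f t / f 0) := fun t ht =>
    isPreconnected_Icc.induction₂ (fun x y => Bt y = (Bt x).scale (f y / f x)) hlocal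
      (fun x y z hx hy hz hxy hyz => by
        rw [hyz, hxy, Barcode.scale_scale _ (div_pos (hfpos y hy) (hfpos x hx))
          (div_pos (hfpos z hz) (hfpos y hy)), div_mul_div_cancel₀ (hfpos y hy).ne'])
      (fun x y hx hy hxy => by
        rw [Barcode.eq_scale_inv_of_eq_scale (div_pos (hfpos y hy) (hfpos x hx)) hxy, inv_div])
      h0 ht
  have hbase : Bt 0 = (Bt 0).scale (f 0) := Barcode.eq_scale_self (hfpos 0 h0)
    (hS.forall_mul_eq_self_of_image_mul_eq (hfpos 0 h0) (hspec 0 h0).symm)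
  intro t ht
  calc Bt t = ((Bt 0).scale (f 0)).scale (f t / f 0) := hbase ▸ hchain t ht
    _ = (Bt 0).scale (f t) := by
      rw [Barcode.scale_scale _ (hfpos 0 h0) (div_pos (hfpos t ht) (hfpos 0 h0)),
        div_mul_cancel₀ _ (hfpos 0 h0).ne']
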